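/- For every n ≥ 0, the value max_{x,y ∈ [0,1]} min(n·x·y, (1-x)(1-y)) equals n(n+1-2√n)/(n-1)² when n > 1, and this maximum is attained at x = y = (√n - 1)/(n - 1). -/

import Mathlib

/-!
With `s = √n`, the point `x₀ = (s - 1)/(n - 1) = 1/(s + 1)` balances the two products:
`n x₀² = (1 - x₀)²`. By AM–GM, if `x + y ≤ 2x₀` then `xy ≤ x₀²`, and otherwise
`(1 - x)(1 - y) ≤ (1 - x₀)²`; either way the minimum is at most its value at `(x₀, x₀)`.
-/

section OrderedField

variable {α : Type*} [Field α] [LinearOrder α] [IsStrictOrderedRing α]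

theorem mul_le_mul_self_of_add_le_two_mul {a b c : α} (h₀ : 0 ≤ a + b) (h : a + b ≤ 2 * c) :
    a * b ≤ c * c := by
  nlinarith [sq_nonneg (a - b)]

theorem min_mul_le_of_balanced {n c x y : α} (hn : 0 ≤ n)
    (hc : n * c * c = (1 - c) * (1 - c)) (h₀ : 0 ≤ x + y) (h₂ : x + y ≤ 2) :
    min (n * x * y) ((1 - x) * (1 - y)) ≤ n * c * c := by
  rcases le_or_gt (x + y) (2 * c) with h | h
  · calc min (n * x * y) ((1 - x) * (1 - y))
        ≤ n * (x * y) := (min_le_left _ _).trans_eq (mul_assoc ..)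
      _ ≤ n * (c * c) := mul_le_mul_of_nonneg_left (mul_le_mul_self_of_add_le_two_mul h₀ h) hn
      _ = n * c * c := (mul_assoc ..).symm
  · calc min (n * x * y) ((1 - x) * (1 - y))
        ≤ (1 - x) * (1 - y) := min_le_right _ _
      _ ≤ (1 - c) * (1 - c) := mul_le_mul_self_of_add_le_two_mul (by linarith) (by linarith)
      _ = n * c * c := hc.symm

theorem inv_add_one_mem_Icc {s : α} (hs : 0 ≤ s) : (s + 1)⁻¹ ∈ Set.Icc (0 : α) 1 :=
  ⟨by positivity, inv_le_one_of_one_le₀ (by linarith)⟩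

theorem sq_mul_inv_add_one_mul_self {s : α} (hs : 0 ≤ s) :
    s ^ 2 * (s + 1)⁻¹ * (s + 1)⁻¹ = (1 - (s + 1)⁻¹) * (1 - (s + 1)⁻¹) := by
  have : s + 1 ≠ 0 := by positivity
  field_simp
  ring

end OrderedField

theorem sqrt_sub_one_div_sub_one {n : ℝ} (hn : 1 < n) : (√n - 1) / (n - 1) = (√n + 1)⁻¹ := by
  have hsq : √n ^ 2 = n := Real.sq_sqrt (by linarith)
  have hne : n - 1 ≠ 0 := by linarith
  field_simp
  linear_combination hsq

theorem stmt_0 (n : ℝ) (hn : 1 < n) :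
    let x₀ := (Real.sqrt n - 1) / (n - 1)
    ((x₀, x₀) ∈ Set.Icc (0:ℝ) 1 ×ˢ Set.Icc (0:ℝ) 1) ∧
    IsMaxOn (fun p : ℝ × ℝ => min (n * p.1 * p.2) ((1 - p.1) * (1 - p.2)))
      (Set.Icc (0:ℝ) 1 ×ˢ Set.Icc (0:ℝ) 1) (x₀, x₀) ∧
    min (n * x₀ * x₀) ((1 - x₀) * (1 - x₀)) = n * (n + 1 - 2 * Real.sqrt n) / (n - 1) ^ 2 := by
  intro x₀
  have hsq : √n ^ 2 = n := Real.sq_sqrt (by linarith)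
  have hx₀ : x₀ = (√n + 1)⁻¹ := sqrt_sub_one_div_sub_one hn
  have hmem : x₀ ∈ Set.Icc (0 : ℝ) 1 := hx₀ ▸ inv_add_one_mem_Icc (Real.sqrt_nonneg n)
  have hbal : n * x₀ * x₀ = (1 - x₀) * (1 - x₀) := by
    rw [hx₀, ← sq_mul_inv_add_one_mul_self (Real.sqrt_nonneg n), hsq]
  have hval : min (n * x₀ * x₀) ((1 - x₀) * (1 - x₀)) = n * x₀ * x₀ := by
    rw [hbal, min_self]
  refine ⟨⟨hmem, hmem⟩, fun p ⟨⟨hx0, hx1⟩, hy0, hy1⟩ => ?_, ?_⟩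
  · change min _ _ ≤ min (n * x₀ * x₀) ((1 - x₀) * (1 - x₀))
    rw [hval]
    exact min_mul_le_of_balanced (by linarith) hbal (by linarith) (by linarith)
  · have hne : n - 1 ≠ 0 := by linarith
    rw [hval]
    simp only [x₀]
    field_simp
    linear_combination hsq
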